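/- Let χ, χ₁ : ℝ → ℂ be smooth compactly supported functions, and let α : ℝ → ℝ be smooth with 0 ≤ α ≤ 1, α(t) = 1 for t ≤ 1/2 and α(t) = 0 for t ≥ 1. Denote by χ̂(ξ) := ∫_ℝ e^{−iyξ} χ(y) dy the Fourier transform of χ, and fix a constant c₀ ∈ ℂ. For k ∈ ℕ define g_k := c₀ ∫_ℝ ∫_ℝ χ₁(x)·α(η)·e^{i x (η − k)}·χ̂(η − k) dη dx; this iterated integral converges absolutely, since χ̂ is a Schwartz function, α is bounded, and χ₁ has compact support. Then the sequence (g_k) is rapidly decreasing: for every N ∈ ℕ there exists C > 0 such that |g_k| ≤ C·k^{−N} for all integers k ≥ 1. -/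

import Mathlib

open Complex MeasureTheory Real FourierTransform

/-- Proposition 5.1 of the paper.
Let `χ, χ₁ : ℝ → ℂ` be smooth compactly supported functions and let `α : ℝ → ℝ` be
smooth with `0 ≤ α ≤ 1`, `α t = 1` for `t ≤ 1/2` and `α t = 0` for `t ≥ 1`.
Let `χhat ξ := ∫ y, exp (-I * y * ξ) * χ y` be the Fourier transform of `χ`, and fix
`c₀ ∈ ℂ`.  For `k ∈ ℕ` set
`g k := c₀ * ∫ x, ∫ η, χ₁ x * α η * exp (I * x * (η - k)) * χhat (η - k)`.
Then `(g k)` is rapidly decreasing: for every `N` there is `C > 0` with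
`‖g k‖ ≤ C * k⁻ᴺ` for all `k ≥ 1`. -/
theorem szego_lowfreq_error_rapid_decay
    (χ χ₁ : ℝ → ℂ) (hχ : ContDiff ℝ (⊤ : ℕ∞) χ) (hχsupp : HasCompactSupport χ)
    (hχ₁ : ContDiff ℝ (⊤ : ℕ∞) χ₁) (hχ₁supp : HasCompactSupport χ₁)
    (α : ℝ → ℝ) (hα : ContDiff ℝ (⊤ : ℕ∞) α)
    (hα₀ : ∀ t : ℝ, 0 ≤ α t) (hα₁ : ∀ t : ℝ, α t ≤ 1)
    (hαone : ∀ t : ℝ, t ≤ (1 : ℝ) / 2 → α t = 1)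
    (hαzero : ∀ t : ℝ, (1 : ℝ) ≤ t → α t = 0)
    (χhat : ℝ → ℂ)
    (hχhat : ∀ ξ : ℝ, χhat ξ = ∫ y : ℝ, Complex.exp (-Complex.I * y * ξ) * χ y)
    (c₀ : ℂ) (g : ℕ → ℂ)
    (hg : ∀ k : ℕ, g k =
      c₀ * ∫ x : ℝ, ∫ η : ℝ,
        χ₁ x * (α η : ℂ) * Complex.exp (Complex.I * x * (η - (k : ℝ))) *
          χhat (η - (k : ℝ))) :
    ∀ N : ℕ, ∃ C : ℝ, 0 < C ∧ ∀ k : ℕ, 1 ≤ k → ‖g k‖ ≤ C / (k : ℝ) ^ N := by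
  -- χhat in terms of the Mathlib Fourier transform
  have hrel : ∀ ξ : ℝ, χhat ξ = 𝓕 χ (ξ / (2 * π)) := by
    intro ξ
    rw [hχhat, Real.fourier_real_eq_integral_exp_smul]
    congr 1
    ext y
    rw [smul_eq_mul]
    congr 2
    have hπ : (π : ℂ) ≠ 0 := by exact_mod_cast Real.pi_ne_zero
    push_cast
    field_simp
  -- polynomial decay of the Fourier transform
  have hFdecay : ∀ n : ℕ, ∃ C : ℝ, ∀ w : ℝ, ‖w‖ ^ n * ‖𝓕 χ w‖ ≤ C := by
    intro n
    have h'f : ∀ (k m : ℕ), (k : ℕ∞) ≤ ⊤ → (m : ℕ∞) ≤ ⊤ →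
        Integrable (fun v : ℝ ↦ ‖v‖ ^ k * ‖iteratedFDeriv ℝ m χ v‖) := by
      intro k m _ _
      apply Continuous.integrable_of_hasCompactSupport
      · exact (continuous_norm.pow k).mul (hχ.continuous_iteratedFDeriv (by exact_mod_cast le_top)).norm
      · exact (hχsupp.iteratedFDeriv m).norm.mul_left
    have h2 := Real.pow_mul_norm_iteratedFDeriv_fourier_le (N := (⊤ : ℕ∞))
      (hχ.of_le (by simp)) h'f (k := 0) (n := n) le_top le_top
    simp only [norm_iteratedFDeriv_zero] at h2
    exact ⟨_, h2⟩
  -- hence polynomial decay of χhat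
  have hhatdecay : ∀ n : ℕ, ∃ C : ℝ, ∀ ξ : ℝ, |ξ| ^ n * ‖χhat ξ‖ ≤ C := by
    intro n
    obtain ⟨C, hC⟩ := hFdecay n
    refine ⟨(2 * π) ^ n * C, fun ξ => ?_⟩
    have h2π : (0 : ℝ) < 2 * π := by positivity
    have := hC (ξ / (2 * π))
    rw [hrel ξ]
    calc |ξ| ^ n * ‖𝓕 χ (ξ / (2 * π))‖
        = (2 * π) ^ n * (‖ξ / (2 * π)‖ ^ n * ‖𝓕 χ (ξ / (2 * π))‖) := by
          rw [← mul_assoc, Real.norm_eq_abs, abs_div, abs_of_pos h2π, div_pow,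
            mul_div_cancel₀]
          positivity
      _ ≤ (2 * π) ^ n * C := by
          apply mul_le_mul_of_nonneg_left this (by positivity)
  intro N
  -- the bound  ‖χhat ξ‖ * (1 + |ξ|)^(N+2) ≤ C₁
  obtain ⟨C₀, hC₀⟩ := hhatdecay 0
  obtain ⟨CM, hCM⟩ := hhatdecay (N + 2)
  set M := N + 2 with hM
  set C₁ : ℝ := max 1 (2 ^ M * (C₀ + CM)) with hC₁def
  have hC₁pos : (0 : ℝ) < C₁ := lt_of_lt_of_le one_pos (le_max_left _ _)
  have hdec : ∀ ξ : ℝ, ‖χhat ξ‖ * (1 + |ξ|) ^ M ≤ C₁ := by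
    intro ξ
    have h0 := hC₀ ξ
    have hMξ := hCM ξ
    simp only [pow_zero, one_mul] at h0
    have habs : (0 : ℝ) ≤ |ξ| := abs_nonneg ξ
    have hb : (1 + |ξ|) ^ M ≤ 2 ^ M * (1 + |ξ| ^ M) := by
      rcases le_total (|ξ|) 1 with h | h
      · calc (1 + |ξ|) ^ M ≤ (2 : ℝ) ^ M := by
              apply pow_le_pow_left₀ (by linarith) (by linarith)
          _ ≤ 2 ^ M * (1 + |ξ| ^ M) := by nlinarith [pow_nonneg habs M, pow_pos (show (0:ℝ) < 2 by norm_num) M]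
      · calc (1 + |ξ|) ^ M ≤ (2 * |ξ|) ^ M := by
              apply pow_le_pow_left₀ (by linarith) (by linarith)
          _ = 2 ^ M * |ξ| ^ M := by rw [mul_pow]
          _ ≤ 2 ^ M * (1 + |ξ| ^ M) := by nlinarith [pow_pos (show (0:ℝ) < 2 by norm_num) M]
    calc ‖χhat ξ‖ * (1 + |ξ|) ^ M ≤ ‖χhat ξ‖ * (2 ^ M * (1 + |ξ| ^ M)) := by
          exact mul_le_mul_of_nonneg_left hb (norm_nonneg _)
      _ = 2 ^ M * (‖χhat ξ‖ + |ξ| ^ M * ‖χhat ξ‖) := by ring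
      _ ≤ 2 ^ M * (C₀ + CM) := by
          apply mul_le_mul_of_nonneg_left (add_le_add h0 hMξ) (by positivity)
      _ ≤ C₁ := le_max_right _ _
  -- integral of ‖χ₁‖
  have hχ₁int : Integrable (fun x : ℝ => ‖χ₁ x‖) :=
    (hχ₁.continuous.norm).integrable_of_hasCompactSupport hχ₁supp.norm
  set I₁ : ℝ := ∫ x : ℝ, ‖χ₁ x‖ with hI₁def
  have hI₁nonneg : 0 ≤ I₁ := integral_nonneg fun x => norm_nonneg _
  refine ⟨max 1 (‖c₀‖ * (I₁ * (C₁ * π))), lt_of_lt_of_le one_pos (le_max_left _ _), ?_⟩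
  intro k hk
  have hkpos : (0 : ℝ) < (k : ℝ) := by exact_mod_cast hk
  have hkN : (0 : ℝ) < (k : ℝ) ^ N := pow_pos hkpos N
  -- the dominating function in η
  set h : ℝ → ℝ := fun η => C₁ / (k : ℝ) ^ N * (1 + (η - (k : ℝ)) ^ 2)⁻¹ with hhdef
  have hint : Integrable h := by
    have : Integrable (fun η : ℝ => (1 + (η - (k : ℝ)) ^ 2)⁻¹) :=
      integrable_inv_one_add_sq.comp_sub_right (k : ℝ)
    exact this.const_mul _
  have hintval : ∫ η : ℝ, h η = C₁ / (k : ℝ) ^ N * π := by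
    rw [hhdef]
    rw [integral_const_mul]
    congr 1
    rw [show (fun η : ℝ => (1 + (η - (k : ℝ)) ^ 2)⁻¹)
        = (fun η : ℝ => (fun u : ℝ => (1 + u ^ 2)⁻¹) (η - (k : ℝ))) from rfl]
    rw [integral_sub_right_eq_self (fun u : ℝ => (1 + u ^ 2)⁻¹) (k : ℝ)]
    exact integral_univ_inv_one_add_sq
  have hhnonneg : ∀ η, 0 ≤ h η := by
    intro η
    apply mul_nonneg (div_nonneg hC₁pos.le hkN.le)
    positivity
  -- pointwise bound on the integrand
  have key : ∀ x η : ℝ,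
      ‖χ₁ x * (α η : ℂ) * Complex.exp (Complex.I * x * (η - (k : ℝ))) *
        χhat (η - (k : ℝ))‖ ≤ ‖χ₁ x‖ * h η := by
    intro x η
    have hexp : ‖Complex.exp (Complex.I * (x:ℂ) * ((η:ℂ) - (((k:ℝ)):ℂ)))‖ = 1 := by
      rw [Complex.norm_exp]
      norm_num [Complex.mul_re]
    have hnorm : ‖χ₁ x * (α η : ℂ) * Complex.exp (Complex.I * x * (η - (k : ℝ))) *
        χhat (η - (k : ℝ))‖ = ‖χ₁ x‖ * α η * ‖χhat (η - (k : ℝ))‖ := by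
      rw [norm_mul, norm_mul, norm_mul, hexp, mul_one, Complex.norm_real,
        Real.norm_eq_abs, _root_.abs_of_nonneg (hα₀ η)]
    rw [hnorm]
    by_cases hη : (1 : ℝ) ≤ η
    · rw [hαzero η hη]
      simp only [mul_zero, zero_mul]
      exact mul_nonneg (norm_nonneg _) (hhnonneg η)
    · push_neg at hη
      have hk1 : (1 : ℝ) ≤ (k : ℝ) := by exact_mod_cast hk
      have habs : |η - (k : ℝ)| = (k : ℝ) - η := by
        rw [abs_of_nonpos (by linarith)]; ring
      have h1k : (k : ℝ) ≤ 1 + |η - (k : ℝ)| := by rw [habs]; linarith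
      have hposdenom : (0 : ℝ) < 1 + (η - (k : ℝ)) ^ 2 := by positivity
      have hb2 : (k : ℝ) ^ N * (1 + (η - (k : ℝ)) ^ 2) ≤ (1 + |η - (k : ℝ)|) ^ M := by
        have e1 : (1 + |η - (k : ℝ)|) ^ M = (1 + |η - (k : ℝ)|) ^ N * (1 + |η - (k : ℝ)|) ^ 2 := by
          rw [hM, pow_add]
        rw [e1]
        have e2 : (k : ℝ) ^ N ≤ (1 + |η - (k : ℝ)|) ^ N :=
          pow_le_pow_left₀ hkpos.le h1k N
        have e3 : 1 + (η - (k : ℝ)) ^ 2 ≤ (1 + |η - (k : ℝ)|) ^ 2 := by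
          nlinarith [abs_nonneg (η - (k : ℝ)), _root_.sq_abs (η - (k : ℝ))]
        exact mul_le_mul e2 e3 hposdenom.le (by positivity)
      have hχb : ‖χhat (η - (k : ℝ))‖ ≤ C₁ / ((k : ℝ) ^ N * (1 + (η - (k : ℝ)) ^ 2)) := by
        have hd := hdec (η - (k : ℝ))
        have hposM : (0 : ℝ) < (1 + |η - (k : ℝ)|) ^ M := by positivity
        have h1 : ‖χhat (η - (k : ℝ))‖ ≤ C₁ / (1 + |η - (k : ℝ)|) ^ M := by
          rw [le_div_iff₀ hposM]; exact hd
        apply h1.trans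
        apply div_le_div_of_nonneg_left hC₁pos.le ?_ hb2
        · positivity
      calc ‖χ₁ x‖ * α η * ‖χhat (η - (k : ℝ))‖
          ≤ ‖χ₁ x‖ * 1 * (C₁ / ((k : ℝ) ^ N * (1 + (η - (k : ℝ)) ^ 2))) := by
            apply mul_le_mul (by
              apply mul_le_mul_of_nonneg_left (hα₁ η) (norm_nonneg _)) hχb (norm_nonneg _)
              (by positivity)
        _ = ‖χ₁ x‖ * h η := by
            rw [hhdef, mul_one]
            field_simp
  -- inner integral bound
  have inner_bound : ∀ x : ℝ,
      ‖∫ η : ℝ, χ₁ x * (α η : ℂ) * Complex.exp (Complex.I * x * (η - (k : ℝ))) *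
        χhat (η - (k : ℝ))‖ ≤ ‖χ₁ x‖ * (C₁ / (k : ℝ) ^ N * π) := by
    intro x
    calc ‖∫ η : ℝ, χ₁ x * (α η : ℂ) * Complex.exp (Complex.I * x * (η - (k : ℝ))) *
          χhat (η - (k : ℝ))‖
        ≤ ∫ η : ℝ, ‖χ₁ x * (α η : ℂ) * Complex.exp (Complex.I * x * (η - (k : ℝ))) *
            χhat (η - (k : ℝ))‖ := norm_integral_le_integral_norm _
      _ ≤ ∫ η : ℝ, ‖χ₁ x‖ * h η := by
          apply integral_mono_of_nonneg
          · exact Filter.Eventually.of_forall fun η => norm_nonneg _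
          · exact hint.const_mul _
          · exact Filter.Eventually.of_forall fun η => key x η
      _ = ‖χ₁ x‖ * (C₁ / (k : ℝ) ^ N * π) := by
          rw [integral_const_mul, hintval]
  -- outer integral
  have outer : ‖g k‖ ≤ ‖c₀‖ * (I₁ * (C₁ / (k : ℝ) ^ N * π)) := by
    rw [hg k, norm_mul]
    apply mul_le_mul_of_nonneg_left ?_ (norm_nonneg c₀)
    calc ‖∫ x : ℝ, ∫ η : ℝ, χ₁ x * (α η : ℂ) *
          Complex.exp (Complex.I * x * (η - (k : ℝ))) * χhat (η - (k : ℝ))‖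
        ≤ ∫ x : ℝ, ‖∫ η : ℝ, χ₁ x * (α η : ℂ) *
            Complex.exp (Complex.I * x * (η - (k : ℝ))) * χhat (η - (k : ℝ))‖ :=
          norm_integral_le_integral_norm _
      _ ≤ ∫ x : ℝ, ‖χ₁ x‖ * (C₁ / (k : ℝ) ^ N * π) := by
          apply integral_mono_of_nonneg
          · exact Filter.Eventually.of_forall fun x => norm_nonneg _
          · exact hχ₁int.mul_const _
          · exact Filter.Eventually.of_forall inner_bound
      _ = I₁ * (C₁ / (k : ℝ) ^ N * π) := by rw [integral_mul_const]
  apply outer.trans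
  rw [div_eq_mul_inv (max 1 (‖c₀‖ * (I₁ * (C₁ * π))))]
  have : ‖c₀‖ * (I₁ * (C₁ / (k : ℝ) ^ N * π)) = ‖c₀‖ * (I₁ * (C₁ * π)) * ((k : ℝ) ^ N)⁻¹ := by
    field_simp
  rw [this]
  apply mul_le_mul_of_nonneg_right (le_max_right _ _) (by positivity)
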